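/- arXiv:2105.06075 — 2 statements merged into one kernel-verified Lean document; each statement's English description precedes it below -/
import Mathlib

section
/- For any n, f with f < n/2 and any Δ > 0, there exists a per-slot election probability p satisfying p < (n − 2f) / (2Δ · n · (n − f)); and for such p, Tcheckpoint sufficiently large, and Trecent fixed, there exists ε > 0 such that (1+ε)·p·f < (1−ε)·(1 − 2pnΔ)·p·(n−f) − (Trecent + 2Δ + 1)/Tcheckpoint. -/
/-- For `f < n/2` and `Δ > 0` there exists an election probability
`p < (n − 2f)/(2Δ·n·(n−f))`; and for any such `p`, any `Trecent ≥ 0`, there are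
`ε > 0` and a threshold `T0` such that for all `Tcheckpoint ≥ T0`,
`(1+ε)·p·f < (1−ε)·(1 − 2pnΔ)·p·(n−f) − (Trecent + 2Δ + 1)/Tcheckpoint`. -/
theorem key_parameter_inequality (n f : ℕ) (hf : 2 * f < n)
    (Δ : ℝ) (hΔ : 0 < Δ) :
    (∃ p : ℝ, 0 < p ∧ p < ((n : ℝ) - 2 * f) / (2 * Δ * n * (n - f))) ∧
    ∀ p : ℝ, 0 < p → p < ((n : ℝ) - 2 * f) / (2 * Δ * n * (n - f)) →
      ∀ Trecent : ℝ, 0 ≤ Trecent →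
        ∃ ε : ℝ, 0 < ε ∧ ∃ T0 : ℝ, ∀ Tcp : ℝ, T0 ≤ Tcp → 0 < Tcp →
          (1 + ε) * p * f
            < (1 - ε) * (1 - 2 * p * n * Δ) * p * ((n : ℝ) - f)
              - (Trecent + 2 * Δ + 1) / Tcp := by
  have hfn : (f : ℝ) < n := by exact_mod_cast lt_of_le_of_lt (Nat.le_add_left f f) (by simpa [two_mul] using hf)
  have hnf : (0:ℝ) < (n:ℝ) - f := by linarith
  have hn : (0:ℝ) < n := lt_of_le_of_lt (Nat.cast_nonneg f) hfn
  have hnum : (0:ℝ) < (n:ℝ) - 2 * f := by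
    have : (2*f : ℕ) < n := hf
    have := Nat.cast_lt (α := ℝ) |>.2 this
    push_cast at this; linarith
  have hden : (0:ℝ) < 2 * Δ * n * ((n:ℝ) - f) := by positivity
  have hq : (0:ℝ) < ((n : ℝ) - 2 * f) / (2 * Δ * n * (n - f)) := div_pos hnum hden
  constructor
  · exact ⟨_, half_pos hq, half_lt_self hq⟩
  intro p hp hplt Trecent hTr
  set B : ℝ := (1 - 2 * p * n * Δ) * p * ((n:ℝ) - f) with hB
  set C : ℝ := p * f with hC
  have hCnonneg : 0 ≤ C := by positivity
  have hBC : C < B := by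
    have h1 : p * (2 * Δ * n * ((n:ℝ) - f)) < (n:ℝ) - 2 * f :=
      (lt_div_iff₀ hden).mp hplt
    have h2 : (f:ℝ) < (1 - 2 * p * n * Δ) * ((n:ℝ) - f) := by nlinarith
    have := mul_lt_mul_of_pos_left h2 hp
    calc C = p * f := rfl
      _ < p * ((1 - 2 * p * n * Δ) * ((n:ℝ) - f)) := this
      _ = B := by ring
  have hsum : 0 < B + C := by linarith
  have hBCpos : 0 < B - C := by linarith
  set ε : ℝ := (B - C) / (2 * (B + C)) with hε
  have hεpos : 0 < ε := div_pos hBCpos (by linarith)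
  have hgap : (1 - ε) * B - (1 + ε) * C = (B - C) / 2 := by
    have : ε * (B + C) = (B - C) / 2 := by
      rw [hε]; field_simp
    nlinarith [this]
  set D : ℝ := Trecent + 2 * Δ + 1 with hD
  have hDpos : 0 < D := by positivity
  refine ⟨ε, hεpos, 4 * D / (B - C), ?_⟩
  intro Tcp hT0 hTpos
  have hfrac : D / Tcp < (B - C) / 2 := by
    have hT0pos : 0 < 4 * D / (B - C) := by positivity
    have h1 : D / Tcp ≤ D / (4 * D / (B - C)) := by
      apply div_le_div_of_nonneg_left (le_of_lt hDpos) hT0pos hT0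
    have h2 : D / (4 * D / (B - C)) = (B - C) / 4 := by
      field_simp
    have : (B - C) / 4 < (B - C) / 2 := by linarith
    linarith [h1, h2 ▸ h1]
  have key : (1 + ε) * C < (1 - ε) * B - D / Tcp := by linarith [hgap]
  calc (1 + ε) * p * f = (1 + ε) * C := by rw [hC]; ring
    _ < (1 - ε) * B - D / Tcp := key
    _ = (1 - ε) * (1 - 2 * p * n * Δ) * p * ((n:ℝ) - f) - (Trecent + 2 * Δ + 1) / Tcp := by
        rw [hB, hD]; ring
end

section
/- Accountable safety resilience upper bound interaction: if a checkpoint requires q accept votes out of n nodes and honest nodes never vote accept for two conflicting blocks (across iterations, given consistent checkpoint history), then a safety violation between two checkpointed conflicting blocks with vote sets of sizes ≥ q each irrefutably implicates at least 2q − n specific nodes, and these culprits can be extracted from the union of the two BFT ledgers (whichever is longer, assuming BFT ledger safety), since all 2q votes appear in it. -/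
/-- Abstract quorum-based accountability: if two conflicting checkpointed blocks
have accept-vote sets `S1`, `S2` of size at least `q` out of `n` nodes, honest
nodes never vote for both (given consistent checkpoint decisions), and all votes
are recorded in prefix-comparable BFT ledgers `L1`, `L2`, then at least `2q − n`
specific nodes are irrefutably implicated, none of them honest, and all their
votes appear in one of the two ledgers (the longer one). -/
theorem quorum_accountability_extraction
    (n q : ℕ) (Vote : Type)
    (Honest S1 S2 : Finset (Fin n))
    (hq1 : q ≤ S1.card) (hq2 : q ≤ S2.card)
    (voteOf1 voteOf2 : Fin n → Vote)   -- the accept votes for the two conflicting blocks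
    (L1 L2 : List Vote)
    (hv1 : ∀ i ∈ S1, voteOf1 i ∈ L1) (hv2 : ∀ i ∈ S2, voteOf2 i ∈ L2)
    -- BFT ledger safety: the two honest views are prefix-comparable
    (hprefix : L1 <+: L2 ∨ L2 <+: L1)
    -- honest voting discipline: no honest node's votes support both conflicting checkpoints
    (hhonest : ∀ i ∈ Honest, ¬ (i ∈ S1 ∧ i ∈ S2)) :
    2 * q - n ≤ (S1 ∩ S2).card ∧
    (S1 ∩ S2) ∩ Honest = ∅ ∧
    ∃ L, (L = L1 ∨ L = L2) ∧ (∀ i ∈ S1, voteOf1 i ∈ L) ∧ (∀ i ∈ S2, voteOf2 i ∈ L) := by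
  refine ⟨?_, ?_, ?_⟩
  · have hcard : S1.card + S2.card - (S1 ∪ S2).card ≤ (S1 ∩ S2).card := by
      have := Finset.card_union_add_card_inter S1 S2
      omega
    have hun : (S1 ∪ S2).card ≤ n := by
      simpa using Finset.card_le_univ (S1 ∪ S2)
    omega
  · ext i
    simp only [Finset.mem_inter, Finset.notMem_empty, iff_false, Finset.mem_inter]
    rintro ⟨⟨h1, h2⟩, hH⟩
    exact hhonest i hH ⟨h1, h2⟩
  · rcases hprefix with h | h
    · exact ⟨L2, Or.inr rfl, fun i hi => h.subset (hv1 i hi), hv2⟩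
    · exact ⟨L1, Or.inl rfl, hv1, fun i hi => h.subset (hv2 i hi)⟩
end
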